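/- Let p \ge 5 be a prime and n \in {0,1,3}. Then: (i) \mu_p({(A,B) \in \mathbb{Z}_p^2 : v_p(4A^3+27B^2) = 0 and the reduction T^3 + \bar{A}T + \bar{B} \in F_p[T] has exactly n roots in F_p}) equals (p^2-1)/(3p^2) if n=0, (p-1)/(2p) if n=1, and (p-1)(p-2)/(6p^2) if n=3; and (ii) \mu_p({(A,B) \in \mathbb{Z}_p^2 : v_p(A) \ge 2, v_p(B) \ge 3, v_p(4A^3+27B^2) = 6, and the reduction of T^3 + (A/p^2)T + (B/p^3) in F_p[T] has exactly n roots in F_p}) equals (p^2-1)/(3p^7) if n=0, (p-1)/(2p^6) if n=1, and (p-1)(p-2)/(6p^7) if n=3. -/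

import Mathlib

/-!
Both sets are unions of fibers of a reduction map from `ℤ_p²` onto a finite ring: for (i) the
reduction `(A, B) ↦ (A mod p, B mod p)`, and for (ii) the reduction modulo `p³ × p⁴`, where the
fibers in question are those of `(p² a, p³ b)`, i.e. `(A/p², B/p³) ≡ (a, b)`. A Haar probability
measure gives every fiber of a surjective additive homomorphism onto a finite group the same mass,
`p⁻²` resp. `p⁻⁷`, so both densities count the pairs `(a, b) ∈ F_p²` with `4a³ + 27b² ≠ 0` whose
cubic `T³ + aT + b` has `n` roots. Parametrising cubics by their roots, three distinct roots
`r, s, -(r + s)` give `(p - 1)(p - 2)/6` pairs, a root `r` times a quadratic `T² + rT + d` with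
nonsquare discriminant gives `p(p - 1)/2`, the singular pairs are the `p` pairs `(-3t², 2t³)`, and
the root-free pairs make up the remaining `(p² - 1)/3`.
-/

open MeasureTheory

noncomputable section

instance (p : ℕ) [Fact p.Prime] : MeasurableSpace ℤ_[p] := borel _
instance (p : ℕ) [Fact p.Prime] : BorelSpace ℤ_[p] := ⟨rfl⟩

open Finset
open scoped ENNReal

section DepressedCubic

variable {F : Type*} [Field F]

def depressedCubicRoots (a b : F) : Set F := {x | x ^ 3 + a * x + b = 0}

lemma coeffs_eq_of_two_roots {a b r s : F} (hrs : r ≠ s)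
    (hr : r ^ 3 + a * r + b = 0) (hs : s ^ 3 + a * s + b = 0) :
    a = -(r ^ 2 + r * s + s ^ 2) ∧ b = r * s * (r + s) := by
  have ha : a = -(r ^ 2 + r * s + s ^ 2) := by
    have key : (r - s) * (a + (r ^ 2 + r * s + s ^ 2)) = 0 := by linear_combination hr - hs
    linear_combination (mul_eq_zero.1 key).resolve_left (sub_ne_zero.2 hrs)
  exact ⟨ha, by linear_combination hr - r * ha⟩

lemma depressedCubicRoots_of_roots (r s : F) :
    depressedCubicRoots (-(r ^ 2 + r * s + s ^ 2)) (r * s * (r + s)) = {r, s, -(r + s)} := by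
  ext x
  simp only [depressedCubicRoots, Set.mem_ofPred_eq, Set.mem_insert_iff, Set.mem_singleton_iff]
  constructor
  · intro h
    have key : (x - r) * (x - s) * (x + (r + s)) = 0 := by linear_combination h
    rcases mul_eq_zero.1 key with h' | h'
    · rcases mul_eq_zero.1 h' with h'' | h''
      · exact Or.inl (by linear_combination h'')
      · exact Or.inr (Or.inl (by linear_combination h''))
    · exact Or.inr (Or.inr (by linear_combination h'))
  · rintro (rfl | rfl | rfl) <;> ring

/-- `(r - s)(2r + s)(r + 2s)` vanishes iff two of the roots `r, s, -(r + s)` coincide. -/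
lemma disc_of_roots (r s : F) :
    4 * (-(r ^ 2 + r * s + s ^ 2)) ^ 3 + 27 * (r * s * (r + s)) ^ 2 =
      -((r - s) * (2 * r + s) * (r + 2 * s)) ^ 2 := by
  ring

lemma ncard_depressedCubicRoots_of_roots {r s : F}
    (h : (r - s) * (2 * r + s) * (r + 2 * s) ≠ 0) :
    (depressedCubicRoots (-(r ^ 2 + r * s + s ^ 2)) (r * s * (r + s))).ncard = 3 := by
  simp only [mul_ne_zero_iff, sub_ne_zero] at h
  obtain ⟨⟨hrs, h2rs⟩, hr2s⟩ := h
  rw [depressedCubicRoots_of_roots, Set.ncard_eq_three]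
  exact ⟨r, s, -(r + s), hrs, fun h => h2rs (by linear_combination h),
    fun h => hr2s (by linear_combination h), rfl⟩

lemma depressedCubicRoots_of_not_isSquare {r d : F} (h : ¬IsSquare (r ^ 2 - 4 * d)) :
    depressedCubicRoots (d - r ^ 2) (-(r * d)) = {r} := by
  ext x
  simp only [depressedCubicRoots, Set.mem_ofPred_eq, Set.mem_singleton_iff]
  constructor
  · intro hx
    have key : (x - r) * (x ^ 2 + r * x + d) = 0 := by linear_combination hx
    refine sub_eq_zero.1 ((mul_eq_zero.1 key).resolve_right fun hq => h ?_)
    exact ⟨2 * x + r, by linear_combination -4 * hq⟩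
  · rintro rfl
    ring

lemma disc_of_not_isSquare (r d : F) :
    4 * (d - r ^ 2) ^ 3 + 27 * (-(r * d)) ^ 2 = -(2 * r ^ 2 + d) ^ 2 * (r ^ 2 - 4 * d) := by
  ring

lemma ncard_depressedCubicRoots_mem {a b : F} (h : 4 * a ^ 3 + 27 * b ^ 2 ≠ 0) :
    (depressedCubicRoots a b).ncard ∈ ({0, 1, 3} : Finset ℕ) := by
  simp only [Finset.mem_insert, Finset.mem_singleton]
  by_cases hle : (depressedCubicRoots a b).ncard ≤ 1
  · omega
  have hlt : 1 < (depressedCubicRoots a b).ncard := by omega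
  obtain ⟨r, s, hr, hs, hrs⟩ :=
    (Set.one_lt_ncard_iff (Set.finite_of_ncard_pos (by omega))).1 hlt
  obtain ⟨rfl, rfl⟩ := coeffs_eq_of_two_roots hrs hr hs
  rw [disc_of_roots, neg_ne_zero] at h
  exact Or.inr (Or.inr (ncard_depressedCubicRoots_of_roots (pow_ne_zero_iff two_ne_zero |>.1 h)))

lemma not_isSquare_of_depressedCubicRoots_eq_singleton {a b r : F} (h2 : (2 : F) ≠ 0)
    (hdisc : 4 * a ^ 3 + 27 * b ^ 2 ≠ 0) (hr : depressedCubicRoots a b = {r}) :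
    ¬IsSquare (r ^ 2 - 4 * (a + r ^ 2)) := by
  have hroot : r ^ 3 + a * r + b = 0 := (hr ▸ Set.mem_singleton r :)
  rintro ⟨y, hy⟩
  -- `u` is a root of the quadratic cofactor `X² + rX + (a + r²)` of `X - r`
  set u := (y - r) / 2 with hu
  have hquad : u ^ 2 + r * u + (a + r ^ 2) = 0 := by
    rw [hu]; field_simp; linear_combination -hy
  have hur : u = r := by
    have : u ∈ depressedCubicRoots a b := by
      show u ^ 3 + a * u + b = 0
      linear_combination (u - r) * hquad + hroot
    simpa [hr] using this
  have ha : a = -(3 * r ^ 2) := by rw [hur] at hquad; linear_combination hquad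
  have hb : b = 2 * r ^ 3 := by linear_combination hroot - r * ha
  exact hdisc (by rw [ha, hb]; ring)

end DepressedCubic

section Counting

variable {F : Type*} [Field F] [Fintype F] [DecidableEq F]

variable (F) in
def separableCubicsWithRoots (n : ℕ) : Finset (F × F) :=
  {ab | 4 * ab.1 ^ 3 + 27 * ab.2 ^ 2 ≠ 0 ∧ (depressedCubicRoots ab.1 ab.2).ncard = n}

lemma mem_separableCubicsWithRoots {n : ℕ} {ab : F × F} :
    ab ∈ separableCubicsWithRoots F n ↔
      4 * ab.1 ^ 3 + 27 * ab.2 ^ 2 ≠ 0 ∧ (depressedCubicRoots ab.1 ab.2).ncard = n := by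
  simp [separableCubicsWithRoots]

lemma two_mul_card_filter_not_isSquare (hF : ringChar F ≠ 2) :
    2 * #{a : F | ¬IsSquare a} = Fintype.card F - 1 := by
  have hχ : ∀ a : F, quadraticChar F a =
      (if IsSquare a then 1 else -1) - if a = 0 then 1 else 0 := by
    intro a
    rw [quadraticChar_apply, quadraticCharFun]
    split_ifs with h0 hsq <;> simp_all
  have hsum := quadraticChar_sum_zero hF
  simp [hχ, Finset.sum_sub_distrib, Finset.sum_ite] at hsum
  have htot := Finset.card_filter_add_card_filter_not (s := (univ : Finset F)) (IsSquare ·)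
  rw [card_univ] at htot
  omega

lemma card_filter_disc_eq_zero (h2 : (2 : F) ≠ 0) (h3 : (3 : F) ≠ 0) :
    #{ab : F × F | 4 * ab.1 ^ 3 + 27 * ab.2 ^ 2 = 0} = Fintype.card F := by
  have h27 : (27 : F) ≠ 0 := by
    rw [show (27 : F) = 3 ^ 3 by norm_num]
    exact pow_ne_zero 3 h3
  -- `t` is recovered from `(-3t², 2t³)` as `-3b / 2a`, also at `t = 0` since `x / 0 = 0`
  have hleft : Function.LeftInverse (fun ab : F × F => -3 * ab.2 / (2 * ab.1))
      (fun t => (-3 * t ^ 2, 2 * t ^ 3)) := by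
    intro t
    rcases eq_or_ne t 0 with rfl | ht
    · simp
    · field_simp
  have himage : ({ab : F × F | 4 * ab.1 ^ 3 + 27 * ab.2 ^ 2 = 0} : Finset (F × F)) =
      univ.image (fun t => (-3 * t ^ 2, 2 * t ^ 3)) := by
    ext ⟨a, b⟩
    simp only [mem_filter, mem_univ, true_and, mem_image, Prod.mk.injEq]
    constructor
    · intro h
      refine ⟨-3 * b / (2 * a), ?_⟩
      rcases eq_or_ne a 0 with rfl | ha
      · have hb : b = 0 := by simpa [h27] using h
        simp [hb]
      · constructor
        · field_simp
          linear_combination -h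
        · field_simp
          linear_combination -b * h
    · rintro ⟨t, rfl, rfl⟩
      ring
  rw [himage, card_image_of_injective _ hleft.injective, card_univ]

lemma card_filter_mul_eq_zero (h2 : (2 : F) ≠ 0) (h3 : (3 : F) ≠ 0) (r : F) :
    #{s : F | (r - s) * (2 * r + s) * (r + 2 * s) = 0} = if r = 0 then 1 else 3 := by
  have hset : ({s : F | (r - s) * (2 * r + s) * (r + 2 * s) = 0} : Finset F) =
      {r, -(2 * r), -(r / 2)} := by
    ext s
    simp only [mem_filter, mem_univ, true_and, mem_insert, mem_singleton, mul_eq_zero, or_assoc]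
    refine or_congr ?_ (or_congr ?_ ?_)
    · exact sub_eq_zero.trans eq_comm
    · exact add_eq_zero_iff_eq_neg'
    · constructor <;> intro h <;> field_simp at h ⊢ <;> linear_combination h
  rw [hset]
  split_ifs with hr
  · simp [hr]
  · have h3r : 3 * r ≠ 0 := mul_ne_zero h3 hr
    have hhalf : r / 2 * 2 = r := div_mul_cancel₀ r h2
    exact card_eq_three.2 ⟨r, -(2 * r), -(r / 2), fun h => h3r (by linear_combination h),
      fun h => h3r (by linear_combination 2 * h - hhalf),
      fun h => h3r (by linear_combination -2 * h + hhalf), rfl⟩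

variable (F) in
def distinctRootPairs : Finset (F × F) :=
  {rs | (rs.1 - rs.2) * (2 * rs.1 + rs.2) * (rs.1 + 2 * rs.2) ≠ 0}

def cubicOfRoots (rs : F × F) : F × F :=
  (-(rs.1 ^ 2 + rs.1 * rs.2 + rs.2 ^ 2), rs.1 * rs.2 * (rs.1 + rs.2))

lemma card_distinctRootPairs (h2 : (2 : F) ≠ 0) (h3 : (3 : F) ≠ 0) :
    #(distinctRootPairs F) = (Fintype.card F - 1) * (Fintype.card F - 2) := by
  have hfiber (r : F) : #{s : F | (r - s) * (2 * r + s) * (r + 2 * s) ≠ 0} +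
      (if r = 0 then 1 else 3) = Fintype.card F := by
    rw [← card_filter_mul_eq_zero h2 h3 r, add_comm, card_filter_add_card_filter_not, card_univ]
  have hsum : #(distinctRootPairs F) =
      ∑ r : F, #{s : F | (r - s) * (2 * r + s) * (r + 2 * s) ≠ 0} := by
    simp only [distinctRootPairs, card_filter, Fintype.sum_prod_type]
  have hite : ∑ r : F, (if r = 0 then 1 else 3) = 3 * Fintype.card F - 2 := by
    have hq : 0 < Fintype.card F := Fintype.card_pos
    simp [sum_ite, filter_ne', filter_eq']
    omega
  have htot := Finset.sum_congr rfl (fun r (_ : r ∈ univ) => hfiber r)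
  rw [sum_add_distrib, ← hsum, hite, sum_const, card_univ, smul_eq_mul] at htot
  obtain ⟨m, hm⟩ : ∃ m, Fintype.card F = m + 2 :=
    ⟨_, (Nat.sub_add_cancel Fintype.one_lt_card).symm⟩
  rw [hm] at htot ⊢
  simp only [Nat.add_sub_cancel, show m + 2 - 1 = m + 1 by omega]
  ring_nf at htot ⊢
  omega

lemma cubicOfRoots_mem_separableCubicsWithRoots {rs : F × F} (h : rs ∈ distinctRootPairs F) :
    cubicOfRoots rs ∈ separableCubicsWithRoots F 3 := by
  replace h := (mem_filter.1 h).2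
  refine mem_separableCubicsWithRoots.2 ⟨?_, ncard_depressedCubicRoots_of_roots h⟩
  rw [cubicOfRoots, disc_of_roots, neg_ne_zero]
  exact pow_ne_zero 2 h

lemma filter_cubicOfRoots_eq_offDiag {a b : F} (hdisc : 4 * a ^ 3 + 27 * b ^ 2 ≠ 0) :
    {rs ∈ distinctRootPairs F | cubicOfRoots rs = (a, b)} =
      (Set.toFinite (depressedCubicRoots a b)).toFinset.offDiag := by
  ext ⟨x, y⟩
  simp only [distinctRootPairs, cubicOfRoots, mem_filter, mem_univ, true_and, mem_offDiag,
    Set.Finite.mem_toFinset, Prod.mk.injEq]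
  constructor
  · rintro ⟨hxy, rfl, rfl⟩
    exact ⟨by show _ = _; ring, by show _ = _; ring, fun h => hxy (by rw [h]; ring)⟩
  · rintro ⟨hx, hy, hxy⟩
    obtain ⟨rfl, rfl⟩ := coeffs_eq_of_two_roots hxy hx hy
    rw [disc_of_roots, neg_ne_zero] at hdisc
    exact ⟨pow_ne_zero_iff two_ne_zero |>.1 hdisc, rfl, rfl⟩

lemma six_mul_card_separableCubicsWithRoots_three (h2 : (2 : F) ≠ 0) (h3 : (3 : F) ≠ 0) :
    6 * #(separableCubicsWithRoots F 3) = (Fintype.card F - 1) * (Fintype.card F - 2) := by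
  have hfiber (ab : F × F) (hab : ab ∈ separableCubicsWithRoots F 3) :
      #{rs ∈ distinctRootPairs F | cubicOfRoots rs = ab} = 6 := by
    obtain ⟨hdisc, hthree⟩ := mem_separableCubicsWithRoots.1 hab
    rw [filter_cubicOfRoots_eq_offDiag hdisc, offDiag_card, ← Set.ncard_eq_toFinset_card, hthree]
  rw [← card_distinctRootPairs h2 h3,
    card_eq_sum_card_fiberwise fun _ => cubicOfRoots_mem_separableCubicsWithRoots,
    sum_congr rfl hfiber, sum_const, smul_eq_mul, mul_comm]

variable (F) in
def quadraticsWithNonsquareDiscr : Finset (F × F) := {rd | ¬IsSquare (rd.1 ^ 2 - 4 * rd.2)}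

lemma card_quadraticsWithNonsquareDiscr (h2 : (2 : F) ≠ 0) :
    #(quadraticsWithNonsquareDiscr F) = Fintype.card F * #{z : F | ¬IsSquare z} := by
  have h4 : (4 : F) ≠ 0 := by simpa [show (4 : F) = 2 * 2 by norm_num] using h2
  have hbij (r : F) : Function.Bijective fun d : F => r ^ 2 - 4 * d :=
    Finite.injective_iff_bijective.1 fun d d' h => mul_left_cancel₀ h4 (by linear_combination -h)
  simp only [quadraticsWithNonsquareDiscr, card_filter, Fintype.sum_prod_type]
  rw [← smul_eq_mul, ← card_univ, ← sum_const]
  exact sum_congr rfl fun r _ => Fintype.sum_bijective _ (hbij r) _ _ fun _ => rfl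

/-- A separable cubic with the single root `r` is `(X - r)(X² + rX + d)` with `r² - 4d` a
nonsquare. -/
lemma card_quadraticsWithNonsquareDiscr_eq (h2 : (2 : F) ≠ 0) :
    #(quadraticsWithNonsquareDiscr F) = #(separableCubicsWithRoots F 1) := by
  refine card_bij (fun rd _ => (rd.2 - rd.1 ^ 2, -(rd.1 * rd.2))) ?_ ?_ ?_
  · rintro ⟨r, d⟩ h
    replace h := (mem_filter.1 h).2
    have hd4 : r ^ 2 - 4 * d ≠ 0 := fun h0 => h (h0 ▸ .zero)
    have hd2 : 2 * r ^ 2 + d ≠ 0 := fun h0 => h ⟨3 * r, by linear_combination -4 * h0⟩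
    refine mem_separableCubicsWithRoots.2 ⟨?_, ?_⟩
    · rw [disc_of_not_isSquare]
      exact mul_ne_zero (neg_ne_zero.2 (pow_ne_zero _ hd2)) hd4
    · rw [depressedCubicRoots_of_not_isSquare h, Set.ncard_singleton]
  · rintro ⟨r, d⟩ h ⟨r', d'⟩ h' heq
    have hroots := congrArg (fun ab : F × F => depressedCubicRoots ab.1 ab.2) heq
    simp only [depressedCubicRoots_of_not_isSquare (mem_filter.1 h).2,
      depressedCubicRoots_of_not_isSquare (mem_filter.1 h').2,
      Set.singleton_eq_singleton_iff] at hroots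
    subst hroots
    simp_all
  · rintro ⟨a, b⟩ hab
    obtain ⟨hdisc, hone⟩ := mem_separableCubicsWithRoots.1 hab
    obtain ⟨r, hr⟩ := Set.ncard_eq_one.1 hone
    have hroot : r ^ 3 + a * r + b = 0 := (hr ▸ Set.mem_singleton r :)
    refine ⟨(r, a + r ^ 2), mem_filter.2 ⟨mem_univ _,
      not_isSquare_of_depressedCubicRoots_eq_singleton h2 hdisc hr⟩, ?_⟩
    ext
    · ring
    · linear_combination -hroot

lemma two_mul_card_separableCubicsWithRoots_one (h2 : (2 : F) ≠ 0) :
    2 * #(separableCubicsWithRoots F 1) = Fintype.card F * (Fintype.card F - 1) := by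
  have hF : ringChar F ≠ 2 := fun h => h2 (by simpa [h] using ringChar.Nat.cast_ringChar (R := F))
  rw [← card_quadraticsWithNonsquareDiscr_eq h2, card_quadraticsWithNonsquareDiscr h2, mul_left_comm,
    two_mul_card_filter_not_isSquare hF]

lemma card_separableCubicsWithRoots_sum (h2 : (2 : F) ≠ 0) (h3 : (3 : F) ≠ 0) :
    #(separableCubicsWithRoots F 0) + #(separableCubicsWithRoots F 1) +
      #(separableCubicsWithRoots F 3) + Fintype.card F = Fintype.card F ^ 2 := by
  have hsplit := card_filter_add_card_filter_not (s := (univ : Finset (F × F)))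
    fun ab => 4 * ab.1 ^ 3 + 27 * ab.2 ^ 2 = 0
  rw [card_filter_disc_eq_zero h2 h3, card_univ, Fintype.card_prod, ← sq] at hsplit
  rw [← hsplit, card_eq_sum_card_fiberwise (t := {0, 1, 3})
    fun ab h => ncard_depressedCubicRoots_mem (mem_filter.1 h).2]
  simp [filter_filter, separableCubicsWithRoots]
  omega

lemma card_separableCubicsWithRoots (h2 : (2 : F) ≠ 0) (h3 : (3 : F) ≠ 0) {n : ℕ}
    (hn : n = 0 ∨ n = 1 ∨ n = 3) :
    (#(separableCubicsWithRoots F n) : ℝ) =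
      if n = 0 then ((Fintype.card F : ℝ) ^ 2 - 1) / 3
      else if n = 1 then (Fintype.card F : ℝ) * (Fintype.card F - 1) / 2
      else ((Fintype.card F : ℝ) - 1) * (Fintype.card F - 2) / 6 := by
  have hq : 2 ≤ Fintype.card F := Fintype.one_lt_card
  have hsum : (_ : ℝ) = _ := congrArg Nat.cast (card_separableCubicsWithRoots_sum h2 h3)
  have hone : (_ : ℝ) = _ := congrArg Nat.cast (two_mul_card_separableCubicsWithRoots_one h2)
  have hthree : (_ : ℝ) = _ :=
    congrArg Nat.cast (six_mul_card_separableCubicsWithRoots_three h2 h3)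
  push_cast [Nat.cast_sub (by omega : 1 ≤ Fintype.card F), Nat.cast_sub hq] at hsum hone hthree
  rcases hn with rfl | rfl | rfl <;> simp <;> linarith

end Counting

section FiniteQuotient

variable {G H : Type*} [AddGroup G] [AddGroup H]

lemma AddMonoidHom.preimage_singleton_apply (f : G →+ H) (g : G) :
    f ⁻¹' {f g} = (fun x => -g + x) ⁻¹' (f ⁻¹' {0}) := by
  ext x
  simp only [Set.mem_preimage, Set.mem_singleton_iff, map_add, map_neg]
  rw [neg_add_eq_zero, eq_comm]

variable [MeasurableSpace G] [MeasurableAdd G] {f : G →+ H}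

lemma measurableSet_preimage_singleton_of_surjective (hf : Function.Surjective f)
    (hker : MeasurableSet (f ⁻¹' {0})) (h : H) : MeasurableSet (f ⁻¹' {h}) := by
  obtain ⟨g, rfl⟩ := hf h
  exact f.preimage_singleton_apply g ▸ hker.preimage (measurable_const_add _)

variable [Fintype H] {μ : Measure G} [μ.IsAddLeftInvariant] [IsProbabilityMeasure μ]

lemma measure_preimage_singleton_of_surjective (hf : Function.Surjective f)
    (hker : MeasurableSet (f ⁻¹' {0})) (h : H) :
    μ (f ⁻¹' {h}) = (Fintype.card H : ℝ≥0∞)⁻¹ := by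
  have hfiber (h : H) : μ (f ⁻¹' {h}) = μ (f ⁻¹' {0}) := by
    obtain ⟨g, rfl⟩ := hf h
    rw [f.preimage_singleton_apply, measure_preimage_add]
  have htotal := sum_measure_preimage_singleton (μ := μ) univ
    fun h _ => measurableSet_preimage_singleton_of_surjective hf hker h
  rw [coe_univ, Set.preimage_univ, measure_univ, sum_congr rfl fun h _ => hfiber h, sum_const,
    card_univ, nsmul_eq_mul] at htotal
  rw [hfiber]
  exact ENNReal.eq_inv_of_mul_eq_one_left ((mul_comm _ _).trans htotal)

lemma measure_preimage_finset_of_surjective (hf : Function.Surjective f)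
    (hker : MeasurableSet (f ⁻¹' {0})) (S : Finset H) :
    μ (f ⁻¹' S) = #S / Fintype.card H := by
  rw [← sum_measure_preimage_singleton S
    fun h _ => measurableSet_preimage_singleton_of_surjective hf hker h]
  simp [measure_preimage_singleton_of_surjective hf hker, div_eq_mul_inv]

end FiniteQuotient

namespace PadicInt

variable {p : ℕ} [Fact p.Prime]

lemma measurableSet_preimage_zero {R : Type*} [Semiring R] {f : ℤ_[p] →+* R} {n : ℕ}
    (hf : RingHom.ker f = Ideal.span {(p : ℤ_[p]) ^ n}) : MeasurableSet (f ⁻¹' {0}) := by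
  have hball : f ⁻¹' {0} = Metric.closedBall 0 ((p : ℝ) ^ (-n : ℤ)) := by
    ext x
    rw [Set.mem_preimage, Set.mem_singleton_iff, ← RingHom.mem_ker, hf, mem_closedBall_zero_iff,
      norm_le_pow_iff_mem_span_pow]
  exact hball ▸ Metric.isClosed_closedBall.measurableSet

lemma ker_toZMod_eq_span_pow_one :
    RingHom.ker (toZMod : ℤ_[p] →+* ZMod p) = Ideal.span {(p : ℤ_[p]) ^ 1} := by
  rw [ker_toZMod, maximalIdeal_eq_span_p, pow_one]

lemma measure_preimage_prodMap (μ : Measure (ℤ_[p] × ℤ_[p])) [μ.IsAddLeftInvariant]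
    [IsProbabilityMeasure μ] {m k i j : ℕ} [NeZero m] [NeZero k] {f : ℤ_[p] →+* ZMod m}
    {g : ℤ_[p] →+* ZMod k} (hf : RingHom.ker f = Ideal.span {(p : ℤ_[p]) ^ i})
    (hg : RingHom.ker g = Ideal.span {(p : ℤ_[p]) ^ j}) (S : Finset (ZMod m × ZMod k)) :
    μ (Prod.map f g ⁻¹' S) = #S / (m * k) := by
  have hker : MeasurableSet (Prod.map f g ⁻¹' {0}) := by
    rw [Prod.zero_eq_mk, ← Set.singleton_prod_singleton, Set.preimage_prod_map_prod]
    exact (measurableSet_preimage_zero hf).prod (measurableSet_preimage_zero hg)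
  have := measure_preimage_finset_of_surjective (μ := μ) (f := (f.prodMap g).toAddMonoidHom)
    ((ZMod.ringHom_surjective f).prodMap (ZMod.ringHom_surjective g)) hker S
  rwa [Fintype.card_prod, ZMod.card, ZMod.card, Nat.cast_mul] at this

lemma norm_eq_one_iff_toZMod_ne_zero (z : ℤ_[p]) : ‖z‖ = 1 ↔ toZMod z ≠ 0 := by
  rw [← isUnit_iff, Ne, ← RingHom.mem_ker, ker_toZMod, IsLocalRing.mem_maximalIdeal,
    mem_nonunits_iff, not_not]

lemma dvd_sub_val_toZMod (w : ℤ_[p]) : (p : ℤ_[p]) ∣ w - ((toZMod w).val : ℕ) := by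
  rw [← Ideal.mem_span_singleton, ← maximalIdeal_eq_span_p, ← ker_toZMod,
    RingHom.sub_mem_ker_iff, map_natCast, ZMod.natCast_zmod_val]

def shiftedResidue (j : ℕ) (a : ZMod p) : ZMod (p ^ (j + 1)) := ((p ^ j * a.val : ℕ) : ZMod _)

lemma toZModPow_eq_shiftedResidue_iff (j : ℕ) (x : ℤ_[p]) (a : ZMod p) :
    toZModPow (j + 1) x = shiftedResidue j a ↔ ∃ w, x = p ^ j * w ∧ toZMod w = a := by
  rw [shiftedResidue, ← map_natCast (toZModPow (j + 1)), ← RingHom.sub_mem_ker_iff,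
    ker_toZModPow, Ideal.mem_span_singleton]
  push_cast
  constructor
  · rintro ⟨c, hc⟩
    refine ⟨(a.val : ℤ_[p]) + p * c, by linear_combination hc, ?_⟩
    simp
  · rintro ⟨w, rfl, rfl⟩
    obtain ⟨c, hc⟩ := dvd_sub_val_toZMod w
    exact ⟨c, by linear_combination (p : ℤ_[p]) ^ j * hc⟩

lemma shiftedResidue_injective (j : ℕ) : Function.Injective (shiftedResidue (p := p) j) := by
  intro a b hab
  have hlift :
      toZModPow (j + 1) ((p : ℤ_[p]) ^ j * ((a.val : ℕ) : ℤ_[p])) = shiftedResidue j b := by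
    rw [← hab, shiftedResidue, ← map_natCast (toZModPow (j + 1))]
    push_cast
    rfl
  obtain ⟨w, hw, rfl⟩ := (toZModPow_eq_shiftedResidue_iff j _ b).1 hlift
  have hp : (p : ℤ_[p]) ^ j ≠ 0 :=
    pow_ne_zero _ (Nat.cast_ne_zero.2 (Fact.out : p.Prime).ne_zero)
  rw [← mul_left_cancel₀ hp hw]
  simp

lemma mem_separableCubicsWithRoots_toZMod {n : ℕ} (A B : ℤ_[p]) :
    (toZMod A, toZMod B) ∈ separableCubicsWithRoots (ZMod p) n ↔
      ‖4 * A ^ 3 + 27 * B ^ 2‖ = 1 ∧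
        {x : ZMod p | x ^ 3 + toZMod A * x + toZMod B = 0}.ncard = n := by
  rw [mem_separableCubicsWithRoots, norm_eq_one_iff_toZMod_ne_zero]
  simp only [map_add, map_mul, map_pow, map_ofNat]
  rfl

lemma norm_disc_scaled_eq_iff (A B : ℤ_[p]) :
    ‖4 * ((p : ℤ_[p]) ^ 2 * A) ^ 3 + 27 * ((p : ℤ_[p]) ^ 3 * B) ^ 2‖ =
        (p : ℝ) ^ (-6 : ℤ) ↔ ‖4 * A ^ 3 + 27 * B ^ 2‖ = 1 := by
  have hp : (p : ℝ) ≠ 0 := Nat.cast_ne_zero.2 (Fact.out : p.Prime).ne_zero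
  rw [show 4 * ((p : ℤ_[p]) ^ 2 * A) ^ 3 + 27 * ((p : ℤ_[p]) ^ 3 * B) ^ 2 =
      (p : ℤ_[p]) ^ 6 * (4 * A ^ 3 + 27 * B ^ 2) by ring, norm_mul, norm_p_pow, Nat.cast_ofNat,
    mul_eq_left₀ (zpow_ne_zero _ hp)]

lemma setOf_good_eq_preimage (n : ℕ) :
    {AB : ℤ_[p] × ℤ_[p] | ‖4 * AB.1 ^ 3 + 27 * AB.2 ^ 2‖ = 1 ∧
        {x : ZMod p | x ^ 3 + toZMod AB.1 * x + toZMod AB.2 = 0}.ncard = n} =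
      Prod.map toZMod toZMod ⁻¹' separableCubicsWithRoots (ZMod p) n := by
  ext AB
  exact (mem_separableCubicsWithRoots_toZMod AB.1 AB.2).symm

lemma setOf_I0star_eq_preimage (n : ℕ) :
    {AB : ℤ_[p] × ℤ_[p] |
        ∃ A' B' : ℤ_[p], AB.1 = (p : ℤ_[p]) ^ 2 * A' ∧ AB.2 = (p : ℤ_[p]) ^ 3 * B' ∧
        ‖4 * AB.1 ^ 3 + 27 * AB.2 ^ 2‖ = (p : ℝ) ^ (-6 : ℤ) ∧
        {x : ZMod p | x ^ 3 + toZMod A' * x + toZMod B' = 0}.ncard = n} =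
      Prod.map (toZModPow 3) (toZModPow 4) ⁻¹'
        (separableCubicsWithRoots (ZMod p) n).image
          (Prod.map (shiftedResidue 2) (shiftedResidue 3)) := by
  ext ⟨A, B⟩
  simp only [Set.mem_ofPred_eq, Set.mem_preimage, coe_image, Set.mem_image, Prod.exists, Prod.map,
    Prod.mk.injEq, mem_coe]
  constructor
  · rintro ⟨A', B', rfl, rfl, hdisc, hn⟩
    exact ⟨toZMod A', toZMod B',
      (mem_separableCubicsWithRoots_toZMod A' B').2
        ⟨(norm_disc_scaled_eq_iff A' B').1 hdisc, hn⟩,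
      ((toZModPow_eq_shiftedResidue_iff 2 _ _).2 ⟨A', rfl, rfl⟩).symm,
      ((toZModPow_eq_shiftedResidue_iff 3 _ _).2 ⟨B', rfl, rfl⟩).symm⟩
  · rintro ⟨a, b, hab, ha, hb⟩
    obtain ⟨A', rfl, rfl⟩ := (toZModPow_eq_shiftedResidue_iff 2 A a).1 ha.symm
    obtain ⟨B', rfl, rfl⟩ := (toZModPow_eq_shiftedResidue_iff 3 B b).1 hb.symm
    obtain ⟨hdisc, hn⟩ := (mem_separableCubicsWithRoots_toZMod A' B').1 hab
    exact ⟨A', B', rfl, rfl, (norm_disc_scaled_eq_iff A' B').2 hdisc, hn⟩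

end PadicInt

/-- For a prime `p ≥ 5` and `μ` the Haar probability measure on `ℤ_p²`:
(i) the density of pairs `(A,B)` with `v_p(4A³+27B²) = 0` (Kodaira type `I₀`) whose reduced
cubic `T³ + ĀT + B̄` has exactly `n` roots in `F_p`, and
(ii) the density of pairs with `v_p(A) ≥ 2`, `v_p(B) ≥ 3`, `v_p(4A³+27B²) = 6` (Kodaira type
`I₀*`) whose associated cubic `T³ + (A/p²)T + (B/p³)` reduces with exactly `n` roots in `F_p`,
are as stated, for `n ∈ {0, 1, 3}`. -/
theorem density_good_and_I0star (p : ℕ) [Fact p.Prime] (hp : 5 ≤ p)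
    (μ : Measure (ℤ_[p] × ℤ_[p])) (hμ : μ.IsAddHaarMeasure) (hμprob : IsProbabilityMeasure μ)
    (n : ℕ) (hn : n = 0 ∨ n = 1 ∨ n = 3) :
    ((μ {AB : ℤ_[p] × ℤ_[p] |
        ‖4 * AB.1 ^ 3 + 27 * AB.2 ^ 2‖ = 1 ∧
        Set.ncard {x : ZMod p |
          x ^ 3 + PadicInt.toZMod AB.1 * x + PadicInt.toZMod AB.2 = 0} = n}).toReal =
      if n = 0 then ((p : ℝ) ^ 2 - 1) / (3 * (p : ℝ) ^ 2)
      else if n = 1 then ((p : ℝ) - 1) / (2 * (p : ℝ))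
      else ((p : ℝ) - 1) * ((p : ℝ) - 2) / (6 * (p : ℝ) ^ 2)) ∧
    ((μ {AB : ℤ_[p] × ℤ_[p] |
        ∃ A' B' : ℤ_[p], AB.1 = (p : ℤ_[p]) ^ 2 * A' ∧ AB.2 = (p : ℤ_[p]) ^ 3 * B' ∧
        ‖4 * AB.1 ^ 3 + 27 * AB.2 ^ 2‖ = (p : ℝ) ^ (-6 : ℤ) ∧
        Set.ncard {x : ZMod p |
          x ^ 3 + PadicInt.toZMod A' * x + PadicInt.toZMod B' = 0} = n}).toReal =
      if n = 0 then ((p : ℝ) ^ 2 - 1) / (3 * (p : ℝ) ^ 7)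
      else if n = 1 then ((p : ℝ) - 1) / (2 * (p : ℝ) ^ 6)
      else ((p : ℝ) - 1) * ((p : ℝ) - 2) / (6 * (p : ℝ) ^ 7)) := by
  have hsmall (k : ℕ) (hk : 0 < k) (hkp : k < p) : (k : ZMod p) ≠ 0 := by
    rw [Ne, ZMod.natCast_eq_zero_iff]
    exact fun hdvd => absurd (Nat.le_of_dvd hk hdvd) (by omega)
  have h2 : (2 : ZMod p) ≠ 0 := by exact_mod_cast hsmall 2 (by norm_num) (by omega)
  have h3 : (3 : ZMod p) ≠ 0 := by exact_mod_cast hsmall 3 (by norm_num) (by omega)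
  rw [PadicInt.setOf_good_eq_preimage, PadicInt.setOf_I0star_eq_preimage,
    PadicInt.measure_preimage_prodMap μ PadicInt.ker_toZMod_eq_span_pow_one
      PadicInt.ker_toZMod_eq_span_pow_one,
    PadicInt.measure_preimage_prodMap μ (PadicInt.ker_toZModPow 3) (PadicInt.ker_toZModPow 4),
    card_image_of_injective _
      ((PadicInt.shiftedResidue_injective 2).prodMap (PadicInt.shiftedResidue_injective 3))]
  simp only [ENNReal.toReal_div, ENNReal.toReal_mul, ENNReal.toReal_natCast,
    card_separableCubicsWithRoots h2 h3 hn, ZMod.card]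
  push_cast
  constructor <;> split_ifs <;> field_simp

end
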